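/- arXiv:1904.01542 — 4 statements merged into one kernel-verified Lean document; each statement's English description precedes it below -/
import Mathlib

section
/- For any group model 𝔊, the treewidth of the incidence graph B(𝔊) is at most the treewidth of the intersection graph I(𝔊) plus one: tw(B(𝔊)) ≤ tw(I(𝔊)) + 1. -/
open SimpleGraph

/-- A tree decomposition of a graph `G` with index type `ι`. -/
structure TreeDecomp {V : Type} (G : SimpleGraph V) (ι : Type) where
  tree : SimpleGraph ι
  isTree : tree.IsTree
  bag : ι → Set V
  covers : ∀ v : V, ∃ x : ι, v ∈ bag x
  coversEdge : ∀ ⦃u v : V⦄, G.Adj u v → ∃ x : ι, u ∈ bag x ∧ v ∈ bag x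
  subtree : ∀ v : V, (tree.induce {x : ι | v ∈ bag x}).Connected

/-- The treewidth of a graph: the least `n` such that there is a tree decomposition
all of whose bags have at most `n + 1` elements. -/
noncomputable def treewidth {V : Type} (G : SimpleGraph V) : ℕ :=
  sInf {n : ℕ | ∃ (ι : Type) (d : TreeDecomp G ι),
    ∀ x : ι, ∃ s : Finset V, ↑s = d.bag x ∧ s.card ≤ n + 1}

/-- The intersection graph of a group model: vertices are the groups, two distinct
groups are adjacent iff they intersect. -/
def intersectionGraph {N M : ℕ} (Gr : Fin M → Finset (Fin N)) : SimpleGraph (Fin M) :=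
  SimpleGraph.fromRel (fun a b => (Gr a ∩ Gr b).Nonempty)

/-- The incidence graph of a group model: a bipartite graph between elements and
groups, with adjacency given by membership. -/
def incidenceGraph {N M : ℕ} (Gr : Fin M → Finset (Fin N)) :
    SimpleGraph (Fin N ⊕ Fin M) :=
  SimpleGraph.fromRel (fun a b =>
    match a, b with
    | Sum.inl e, Sum.inr g => e ∈ Gr g
    | _, _ => False)

/-!
Take an optimal tree decomposition of `I(𝔊)`. The groups containing an element `e` form a clique
of `I(𝔊)`, and by the Helly property of subtrees of a tree a clique lies in a single bag, say that
of the node `x e`. Hanging below each `x e` a new leaf whose bag is the bag of `x e` together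
with `e` gives a tree decomposition of `B(𝔊)` whose bags are at most one larger.
-/

namespace SimpleGraph

variable {V : Type*} {G : SimpleGraph V}

lemma Preconnected.exists_isPath_of_induce {S : Set V} (hS : (G.induce S).Preconnected)
    {u v : V} (hu : u ∈ S) (hv : v ∈ S) :
    ∃ p : G.Walk u v, p.IsPath ∧ ∀ w ∈ p.support, w ∈ S := by
  classical
  obtain ⟨q⟩ := hS ⟨u, hu⟩ ⟨v, hv⟩
  refine ⟨(q.map (Embedding.induce S).toHom).bypass, Walk.bypass_isPath _, fun w hw => ?_⟩
  obtain ⟨w', -, rfl⟩ := List.mem_map.1 <|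
    Walk.support_map _ _ ▸ Walk.support_bypass_subset_support _ hw
  exact w'.2

lemma Walk.exists_walk_to_first_mem {S : Set V} {u v : V} (p : G.Walk u v) (hv : v ∈ S) :
    ∃ g ∈ S, ∃ q : G.Walk u g, ∀ w ∈ q.support, w ∈ S → w = g := by
  induction p with
  | nil => exact ⟨_, hv, .nil, by simp⟩
  | @cons u x v h p ih =>
    by_cases hu : u ∈ S
    · exact ⟨u, hu, .nil, by simp⟩
    obtain ⟨g, hg, q, hq⟩ := ih hv
    refine ⟨g, hg, .cons h q, fun w hw hwS => ?_⟩
    rcases List.mem_cons.1 (Walk.support_cons h q ▸ hw) with rfl | hw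
    · exact absurd hwS hu
    · exact hq w hw hwS

variable {T : SimpleGraph V}

lemma IsAcyclic.eq_of_isPath (hT : T.IsAcyclic) {u v : V} {p q : T.Walk u v}
    (hp : p.IsPath) (hq : q.IsPath) : p = q :=
  congrArg Subtype.val ((hT.subsingleton_path u v).elim ⟨p, hp⟩ ⟨q, hq⟩)

theorem IsAcyclic.exists_gate (hT : T.IsAcyclic) {S : Set V} (hS : (T.induce S).Preconnected)
    {x s₀ : V} (hs₀ : s₀ ∈ S) (hx : T.Reachable x s₀) :
    ∃ g ∈ S, ∀ s ∈ S, ∀ p : T.Walk x s, p.IsPath → g ∈ p.support := by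
  classical
  obtain ⟨g, hg, q, hq⟩ := hx.some.exists_walk_to_first_mem hs₀
  refine ⟨g, hg, fun s hs p hp => ?_⟩
  obtain ⟨r, hr, hrS⟩ := hS.exists_isPath_of_induce hg hs
  -- `q.bypass` meets `S` only at `g` and `r` stays inside `S`, so they only share `g`
  have hqr : (q.bypass.append r).IsPath := by
    rw [Walk.isPath_def, Walk.support_append]
    have hr' := hr.support_nodup
    rw [← Walk.cons_tail_support r] at hr'
    refine q.bypass_isPath.support_nodup.append (List.nodup_cons.1 hr').2 fun w hwq hwr => ?_
    obtain rfl := hq w (q.support_bypass_subset_support hwq) (hrS w (List.mem_of_mem_tail hwr))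
    exact (List.nodup_cons.1 hr').1 hwr
  rw [hT.eq_of_isPath hp hqr]
  exact Walk.support_subset_support_append_left _ _ q.bypass.end_mem_support

lemma IsAcyclic.preconnected_induce_inter (hT : T.IsAcyclic) {A B : Set V}
    (hA : (T.induce A).Preconnected) (hB : (T.induce B).Preconnected) :
    (T.induce (A ∩ B)).Preconnected := by
  rintro ⟨u, huA, huB⟩ ⟨v, hvA, hvB⟩
  obtain ⟨p, hp, hpA⟩ := hA.exists_isPath_of_induce huA hvA
  obtain ⟨q, hq, hqB⟩ := hB.exists_isPath_of_induce huB hvB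
  obtain rfl := hT.eq_of_isPath hp hq
  exact ⟨p.induce (A ∩ B) fun w hw => ⟨hpA w hw, hqB w hw⟩⟩

/-- The gate of `x ∈ A ∩ B` into `C` lies on the path from `x` to `A ∩ C`, which runs in `A`,
and on the one to `B ∩ C`, which runs in `B`. -/
theorem IsAcyclic.inter_inter_nonempty (hT : T.IsAcyclic) {A B C : Set V}
    (hA : (T.induce A).Preconnected) (hB : (T.induce B).Preconnected)
    (hC : (T.induce C).Preconnected) (hAB : (A ∩ B).Nonempty) (hAC : (A ∩ C).Nonempty)
    (hBC : (B ∩ C).Nonempty) : (A ∩ B ∩ C).Nonempty := by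
  obtain ⟨x, hxA, hxB⟩ := hAB
  obtain ⟨y, hyA, hyC⟩ := hAC
  obtain ⟨z, hzB, hzC⟩ := hBC
  obtain ⟨p, hp, hpA⟩ := hA.exists_isPath_of_induce hxA hyA
  obtain ⟨q, hq, hqB⟩ := hB.exists_isPath_of_induce hxB hzB
  obtain ⟨g, hgC, hg⟩ := hT.exists_gate hC hyC ⟨p⟩
  exact ⟨g, ⟨hpA g (hg y hyC p hp), hqB g (hg z hzC q hq)⟩, hgC⟩

/-- Helly property of subtrees. Intersecting all of them with one of them keeps them subtrees,
pairwise intersecting by the case of three. -/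
theorem IsAcyclic.biInter_nonempty (hT : T.IsAcyclic) {ι : Type*} {s : Finset ι}
    (hs : s.Nonempty) {A : ι → Set V} (hA : ∀ i ∈ s, (T.induce (A i)).Preconnected)
    (hAA : ∀ i ∈ s, ∀ j ∈ s, (A i ∩ A j).Nonempty) : (⋂ i ∈ s, A i).Nonempty := by
  induction hs using Finset.Nonempty.cons_induction generalizing A with
  | singleton i => simpa using hAA i (by simp) i (by simp)
  | cons i s hi hs ih =>
    simp only [Finset.mem_cons, forall_eq_or_imp] at hA hAA
    obtain ⟨m, hm⟩ := ih (A := fun j => A i ∩ A j)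
      (fun j hj => hT.preconnected_induce_inter hA.1 (hA.2 j hj))
      (fun j hj k hk => by
        rw [← Set.inter_inter_distrib_left, ← Set.inter_assoc]
        exact hT.inter_inter_nonempty hA.1 (hA.2 j hj) (hA.2 k hk) (hAA.1.2 j hj) (hAA.1.2 k hk)
            (hAA.2 j hj |>.2 k hk))
    simp only [Set.mem_iInter] at hm
    obtain ⟨j, hj⟩ := hs
    refine ⟨m, ?_⟩
    simp only [Set.mem_iInter, Finset.mem_cons, forall_eq_or_imp]
    exact ⟨(hm j hj).1, fun k hk => (hm k hk).2⟩

variable {W : Type*} {H : SimpleGraph W}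

/-- A cycle cannot pass through a vertex with at most one neighbour, so all cycles of `G` live
in the copy of `H`. -/
theorem IsAcyclic.of_embedding_of_subsingleton_neighborSet (φ : H ↪g G) (hH : H.IsAcyclic)
    (hleaf : ∀ v ∉ Set.range φ, (G.neighborSet v).Subsingleton) : G.IsAcyclic := by
  classical
  intro v c hc
  by_cases hout : ∃ u ∈ c.support, u ∉ Set.range φ
  · obtain ⟨u, hu, huφ⟩ := hout
    have hc' : (c.rotate u hu).IsCycle := (Walk.isCycle_rotate hu).2 hc
    exact hc'.snd_ne_penultimate <| hleaf u huφ (Walk.adj_snd hc'.not_nil)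
      (Walk.adj_penultimate hc'.not_nil).symm
  · push Not at hout
    refine φ.isoInduceRange.isAcyclic_iff.1 hH (c.induce _ hout)
      (Walk.IsCycle.of_map (f := (Embedding.induce _).toHom) ?_)
    rwa [Walk.map_induce]

variable {ι ε : Type*}

def attachLeaves (T : SimpleGraph ι) (f : ε → ι) : SimpleGraph (ι ⊕ ε) where
  Adj
    | .inl x, .inl y => T.Adj x y
    | .inl x, .inr e => f e = x
    | .inr e, .inl x => f e = x
    | .inr _, .inr _ => False
  symm := ⟨by
    rintro (x | e) (y | e') h
    exacts [h.symm, h, h, h]⟩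
  loopless := ⟨by
    rintro (x | e) h
    exacts [T.loopless.irrefl x h, h]⟩

variable {T : SimpleGraph ι} {f : ε → ι}

def Embedding.inlAttachLeaves (T : SimpleGraph ι) (f : ε → ι) : T ↪g T.attachLeaves f :=
  ⟨.inl, Iff.rfl⟩

theorem neighborSet_attachLeaves_inr (e : ε) :
    (T.attachLeaves f).neighborSet (.inr e) = {.inl (f e)} := by
  ext (x | e')
  · exact ⟨fun h => congrArg Sum.inl (Eq.symm h), fun h => (Sum.inl_injective h).symm⟩
  · exact ⟨False.elim, fun h => Sum.inl_ne_inr h.symm⟩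

theorem connected_induce_attachLeaves_preimage {A : Set ι} (hA : (T.induce A).Connected) :
    ((T.attachLeaves f).induce (Sum.elim id f ⁻¹' A)).Connected := by
  obtain ⟨⟨a, ha⟩⟩ := hA.nonempty
  have hreach (x : ι) (hx : x ∈ A) :
      ((T.attachLeaves f).induce (Sum.elim id f ⁻¹' A)).Reachable ⟨.inl a, ha⟩ ⟨.inl x, hx⟩ :=
    (hA.preconnected ⟨a, ha⟩ ⟨x, hx⟩).map
      (induceHom (Embedding.inlAttachLeaves T f).toHom (t := Sum.elim id f ⁻¹' A) fun _ hx => hx)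
  rw [connected_iff_exists_forall_reachable]
  refine ⟨⟨.inl a, ha⟩, ?_⟩
  rintro ⟨x | e, hv⟩
  · exact hreach x hv
  · exact (hreach (f e) hv).trans (Adj.reachable (rfl : f e = f e))

theorem IsTree.attachLeaves (hT : T.IsTree) (f : ε → ι) : (T.attachLeaves f).IsTree := by
  refine ⟨?_, hT.isAcyclic.of_embedding_of_subsingleton_neighborSet
    (Embedding.inlAttachLeaves T f) ?_⟩
  · have := connected_induce_attachLeaves_preimage (f := f) (A := Set.univ)
      ((induceUnivIso T).connected_iff.2 hT.connected)
    rw [Set.preimage_univ] at this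
    exact (induceUnivIso _).connected_iff.1 this
  · rintro (x | e) hv
    · exact absurd ⟨x, rfl⟩ hv
    · rw [neighborSet_attachLeaves_inr]
      exact Set.subsingleton_singleton

end SimpleGraph

namespace TreeDecomp

variable {V ι : Type} {G : SimpleGraph V}

theorem exists_bag_superset_of_isClique (d : TreeDecomp G ι) {s : Finset V}
    (hs : G.IsClique (s : Set V)) : ∃ x, (s : Set V) ⊆ d.bag x := by
  rcases s.eq_empty_or_nonempty with rfl | hne
  · obtain ⟨x⟩ := d.isTree.connected.nonempty
    exact ⟨x, by simp⟩
  obtain ⟨x, hx⟩ := d.isTree.isAcyclic.biInter_nonempty hne (A := fun v => {x | v ∈ d.bag x})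
    (fun v _ => (d.subtree v).preconnected) fun u hu v hv => by
      rcases eq_or_ne u v with rfl | huv
      · exact Set.inter_self _ ▸ d.covers u
      · exact d.coversEdge (hs hu hv huv)
  exact ⟨x, fun v hv => Set.mem_iInter₂.1 hx v hv⟩

def single (G : SimpleGraph V) : TreeDecomp G Unit where
  tree := ⊥
  isTree := .of_subsingleton
  bag _ := Set.univ
  covers _ := ⟨(), trivial⟩
  coversEdge _ _ _ := ⟨(), trivial, trivial⟩
  subtree v := by
    have : Nonempty {x : Unit | v ∈ (Set.univ : Set V)} := ⟨⟨(), trivial⟩⟩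
    exact .of_subsingleton

end TreeDecomp

lemma treewidth_le_of_encard_le {V ι : Type} {G : SimpleGraph V} (d : TreeDecomp G ι) {n : ℕ}
    (h : ∀ x, (d.bag x).encard ≤ n + 1) : treewidth G ≤ n := by
  refine Nat.sInf_le ⟨ι, d, fun x => ?_⟩
  obtain ⟨hfin, hcard⟩ := Set.encard_le_coe_iff_finite_ncard_le.1 (h x)
  exact ⟨hfin.toFinset, hfin.coe_toFinset, Set.ncard_eq_toFinset_card _ hfin ▸ hcard⟩

lemma exists_treeDecomp_encard_le_treewidth {V : Type} [Finite V] (G : SimpleGraph V) :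
    ∃ (ι : Type) (d : TreeDecomp G ι), ∀ x, (d.bag x).encard ≤ treewidth G + 1 := by
  have hne : {n : ℕ | ∃ (ι : Type) (d : TreeDecomp G ι),
      ∀ x, ∃ s : Finset V, ↑s = d.bag x ∧ s.card ≤ n + 1}.Nonempty := by
    have := Fintype.ofFinite V
    exact ⟨Fintype.card V, Unit, .single G,
      fun _ => ⟨Finset.univ, by simp [TreeDecomp.single], by simp⟩⟩
  obtain ⟨ι, d, hd⟩ := Nat.sInf_mem hne
  refine ⟨ι, d, fun x => ?_⟩
  obtain ⟨s, hs, hcard⟩ := hd x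
  rw [← hs, Set.encard_coe_eq_coe_finsetCard]
  exact_mod_cast hcard

section GroupModel

variable {N M : ℕ} {Gr : Fin M → Finset (Fin N)}

lemma isClique_intersectionGraph_setOf_mem (e : Fin N) :
    (intersectionGraph Gr).IsClique {g | e ∈ Gr g} := fun _ hg _ hg' hne =>
  ⟨hne, Or.inl ⟨e, Finset.mem_inter.2 ⟨hg, hg'⟩⟩⟩

variable {ι : Type}

/-- The bag of the leaf `inr e` is that of `x e` together with `e`; the bag of `inl i` is that
of `i`. -/
def TreeDecomp.incidence (d : TreeDecomp (intersectionGraph Gr) ι) (x : Fin N → ι)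
    (hx : ∀ e g, e ∈ Gr g → g ∈ d.bag (x e)) : TreeDecomp (incidenceGraph Gr) (ι ⊕ Fin N) where
  tree := d.tree.attachLeaves x
  isTree := d.isTree.attachLeaves x
  bag y := {v | Sum.elim (fun e => y = .inr e) (fun g => g ∈ d.bag (Sum.elim id x y)) v}
  covers
    | .inl e => ⟨.inr e, rfl⟩
    | .inr g => let ⟨i, hi⟩ := d.covers g; ⟨.inl i, hi⟩
  coversEdge := by
    rintro u v ⟨-, h | h⟩ <;> rcases u with e | g <;> rcases v with e' | g' <;>
      try exact (h : False).elim
    · exact ⟨.inr e, rfl, hx e g' h⟩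
    · exact ⟨.inr e', hx e' g h, rfl⟩
  subtree
    | .inl e => by
      change ((d.tree.attachLeaves x).induce {.inr e}).Connected
      rw [induce_singleton_eq_top]
      exact connected_top
    | .inr g => connected_induce_attachLeaves_preimage (d.subtree g)

lemma TreeDecomp.encard_bag_incidence_le (d : TreeDecomp (intersectionGraph Gr) ι)
    (x : Fin N → ι) (hx : ∀ e g, e ∈ Gr g → g ∈ d.bag (x e)) (y : ι ⊕ Fin N) :
    ((d.incidence x hx).bag y).encard ≤ (d.bag (Sum.elim id x y)).encard + 1 := by
  have hsub : (d.incidence x hx).bag y ⊆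
      Sum.inr '' d.bag (Sum.elim id x y) ∪ Sum.inl '' {e | y = .inr e} := by
    rintro (e | g) h
    exacts [.inr ⟨e, h, rfl⟩, .inl ⟨g, h, rfl⟩]
  have hleaf : {e | y = .inr e}.encard ≤ 1 :=
    Set.encard_le_one_iff.2 fun e e' he he' => Sum.inr_injective (he.symm.trans he')
  calc _ ≤ _ := Set.encard_le_encard hsub
    _ ≤ _ := Set.encard_union_le _ _
    _ ≤ _ := by
      rw [Sum.inr_injective.encard_image, Sum.inl_injective.encard_image]
      gcongr

end GroupModel

theorem treewidth_incidence_le_treewidth_intersection_add_one_general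
    {N M : ℕ} (Gr : Fin M → Finset (Fin N)) :
    treewidth (incidenceGraph Gr) ≤ treewidth (intersectionGraph Gr) + 1 := by
  obtain ⟨ι, d, hd⟩ := exists_treeDecomp_encard_le_treewidth (intersectionGraph Gr)
  choose x hx using fun e : Fin N => d.exists_bag_superset_of_isClique
    (s := Finset.univ.filter (e ∈ Gr ·)) (by simpa using isClique_intersectionGraph_setOf_mem e)
  refine treewidth_le_of_encard_le (d.incidence x fun e g heg => hx e (by simpa)) fun y => ?_
  calc _ ≤ _ := d.encard_bag_incidence_le x _ y
    _ ≤ _ := by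
      push_cast
      gcongr
      exact hd _

/-- `tw(B(𝔊)) ≤ tw(I(𝔊)) + 1` for any group model. -/
theorem treewidth_incidence_le_treewidth_intersection_add_one
    {N M : ℕ} (Gr : Fin M → Finset (Fin N))
    (hcover : ∀ i : Fin N, ∃ j : Fin M, i ∈ Gr j) :
    treewidth (incidenceGraph Gr) ≤ treewidth (intersectionGraph Gr) + 1 :=
  treewidth_incidence_le_treewidth_intersection_add_one_general Gr
end

section
/- Let A be the adjacency matrix of a (k, d, ε)-expander graph. Then for every k-sparse vector x ∈ ℝ^N: (1 − 2ε) d ‖x‖₁ ≤ ‖Ax‖₁ ≤ d ‖x‖₁. -/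
/-!
Enumerate the support of `x` by decreasing `|x i|` and call an edge `(i, j)` a collision if `j`
is already a neighbour of an earlier vertex. Each row sum `(A x)_j` is at least its first term
minus the others, so `‖A x‖₁ ≥ d ‖x‖₁ - 2 · (weight of the colliding edges)`. Expansion of the
first `t ≤ k` vertices bounds the number of collisions among them by `ε d t`; as the weights
decrease, Abel summation turns this into the bound `ε d ‖x‖₁` on the colliding weight.
The upper bound is the triangle inequality.
-/

open Finset

theorem sum_mul_le_mul_sum_of_antitoneOn {B : ℝ} {a c : ℕ → ℝ} {s : ℕ}
    (ha : AntitoneOn a (Set.Iio s)) (ha₀ : ∀ t < s, 0 ≤ a t)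
    (hc : ∀ t ≤ s, ∑ u ∈ range t, c u ≤ B * t) :
    ∑ t ∈ range s, c t * a t ≤ B * ∑ t ∈ range s, a t := by
  induction s generalizing a with
  | zero => simp
  | succ s ih =>
    have hlast : ∀ t < s, a s ≤ a t := fun t ht =>
      ha (Set.mem_Iio.2 (ht.trans s.lt_succ_self)) (Set.mem_Iio.2 s.lt_succ_self) ht.le
    -- Abel summation, one step: split every weight into `a s` plus a nonnegative excess.
    have hshift := ih (a := fun t => a t - a s)
      (fun t ht u hu htu => sub_le_sub_right
        (ha (Set.mem_Iio.2 (Nat.lt_succ_of_lt ht)) (Set.mem_Iio.2 (Nat.lt_succ_of_lt hu)) htu) _)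
      (fun t ht => sub_nonneg.2 (hlast t ht)) (fun t ht => hc t (ht.trans s.le_succ))
    have hfull : (∑ u ∈ range (s + 1), c u) * a s ≤ B * (s + 1) * a s := by
      simpa using mul_le_mul_of_nonneg_right (hc (s + 1) le_rfl) (ha₀ s s.lt_succ_self)
    calc ∑ t ∈ range (s + 1), c t * a t
        = ∑ t ∈ range s, c t * (a t - a s) + (∑ u ∈ range (s + 1), c u) * a s := by
          simp only [sum_range_succ, mul_sub, sum_sub_distrib, add_mul, sum_mul]; ring
      _ ≤ B * ∑ t ∈ range s, (a t - a s) + B * (s + 1) * a s := add_le_add hshift hfull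
      _ = B * ∑ t ∈ range (s + 1), a t := by
          simp only [sum_range_succ, sum_sub_distrib, sum_const, card_range, nsmul_eq_mul]; ring

theorem sum_abs_sub_two_mul_sum_abs_nonmin_le_abs_sum {ι : Type*} [LinearOrder ι]
    (F : Finset ι) (y : ι → ℝ) :
    ∑ t ∈ F, |y t| - 2 * ∑ t ∈ F with ∃ u ∈ F, u < t, |y t| ≤ |∑ t ∈ F, y t| := by
  rcases F.eq_empty_or_nonempty with rfl | hF
  · simp
  have hmin := F.min'_mem hF
  have hnonmin : {t ∈ F | ∃ u ∈ F, u < t} = F.erase (F.min' hF) := by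
    ext t
    simp only [mem_filter, mem_erase]
    constructor
    · rintro ⟨htF, u, huF, hut⟩
      exact ⟨(F.min'_le u huF |>.trans_lt hut).ne', htF⟩
    · rintro ⟨htmin, htF⟩
      exact ⟨htF, _, hmin, lt_of_le_of_ne (F.min'_le t htF) (Ne.symm htmin)⟩
  rw [hnonmin, ← add_sum_erase F _ hmin, ← add_sum_erase F _ hmin]
  have htail := abs_sum_le_sum_abs y (F.erase (F.min' hF))
  have hhead := abs_sub_abs_le_abs_add (y (F.min' hF)) (∑ t ∈ F.erase (F.min' hF), y t)
  linarith

theorem Finset.exists_injOn_image_range_antitoneOn {α : Type*} [DecidableEq α] (S : Finset α)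
    (hS : S.Nonempty) (w : α → ℝ) :
    ∃ f : ℕ → α, Set.InjOn f (range #S) ∧ (range #S).image f = S ∧
      AntitoneOn (w ∘ f) (Set.Iio #S) := by
  obtain ⟨i₀, -⟩ := hS
  set L := S.toList.mergeSort fun a b => decide (w b ≤ w a)
  have hperm : L.Perm S.toList := List.mergeSort_perm _ _
  have hlen : L.length = #S := by rw [hperm.length_eq, length_toList]
  have hnodup : L.Nodup := hperm.nodup_iff.2 S.nodup_toList
  have hsorted : L.Pairwise fun a b => w b ≤ w a := by
    simpa using List.pairwise_mergeSort (le := fun a b => decide (w b ≤ w a))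
      (fun a b c hab hbc => by simp only [decide_eq_true_eq] at *; exact hbc.trans hab)
      (fun a b => by simpa using le_total (w b) (w a)) S.toList
  have hget : ∀ t (ht : t < #S), L.getD t i₀ = L[t] := fun t ht =>
    L.getD_eq_getElem i₀ (hlen ▸ ht)
  refine ⟨fun t => L.getD t i₀, fun t ht u hu htu => ?_, ?_, fun t ht u hu htu => ?_⟩
  · rw [mem_coe, mem_range] at ht hu
    simp only [hget t ht, hget u hu] at htu
    exact hnodup.getElem_inj_iff.1 htu
  · ext i
    have hmem : i ∈ S ↔ i ∈ L := by rw [hperm.mem_iff, mem_toList]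
    simp only [mem_image, mem_range, hmem, List.mem_iff_getElem, hlen]
    exact ⟨fun ⟨t, ht, hi⟩ => ⟨t, ht, hget t ht ▸ hi⟩,
      fun ⟨t, ht, hi⟩ => ⟨t, ht, hget t ht ▸ hi⟩⟩
  · rcases htu.eq_or_lt with rfl | htu
    · rfl
    · simp only [Function.comp_apply, hget t ht, hget u hu]
      exact List.pairwise_iff_getElem.1 hsorted t u _ _ htu

theorem sum_sum_filter_eq_mul_sum {γ β : Type*} [Fintype β] (R : γ → β → Prop)
    [∀ i j, Decidable (R i j)] {d : ℕ} (hdeg : ∀ i, #{j | R i j} = d) (s : Finset γ)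
    (g : γ → ℝ) : ∑ j, ∑ i ∈ s with R i j, g i = d * ∑ i ∈ s, g i := by
  simp_rw [sum_filter]
  rw [sum_comm, mul_sum]
  refine sum_congr rfl fun i _ => ?_
  rw [← sum_filter, sum_const, hdeg, nsmul_eq_mul]

namespace Expander

variable {α β : Type*} [Fintype β] (E : α → β → Prop) [∀ i j, Decidable (E i j)]

def nbhd (i : α) : Finset β := {j | E i j}

variable {E}

theorem sum_abs_sum_le_mul_sum_abs [Fintype α] {d : ℕ} (hdeg : ∀ i, #(nbhd E i) = d)
    (x : α → ℝ) : ∑ j, |∑ i with E i j, x i| ≤ d * ∑ i, |x i| :=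
  calc ∑ j, |∑ i with E i j, x i| ≤ ∑ j, ∑ i with E i j, |x i| :=
        sum_le_sum fun _ _ => abs_sum_le_sum_abs _ _
    _ = d * ∑ i, |x i| := sum_sum_filter_eq_mul_sum E hdeg _ _

variable (E) [DecidableEq α] [DecidableEq β]

def collisions (f : ℕ → α) (t : ℕ) : ℕ :=
  #(nbhd E (f t) ∩ ((range t).image f).biUnion (nbhd E))

variable {E}

theorem card_biUnion_add_sum_collisions {d : ℕ} (hdeg : ∀ i, #(nbhd E i) = d)
    (f : ℕ → α) (t : ℕ) :
    #(((range t).image f).biUnion (nbhd E)) + ∑ u ∈ range t, collisions E f u = d * t := by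
  induction t with
  | zero => simp
  | succ t ih =>
    have hunion :=
      card_union_add_card_inter (nbhd E (f t)) (((range t).image f).biUnion (nbhd E))
    rw [hdeg] at hunion
    rw [sum_range_succ, range_add_one, image_insert, biUnion_insert, Nat.mul_succ, ← ih]
    unfold collisions
    omega

theorem sum_collisions_le {k d : ℕ} {ε : ℝ} (hdeg : ∀ i, #(nbhd E i) = d)
    (hexp : ∀ S : Finset α, #S ≤ k → (1 - ε) * d * #S ≤ #(S.biUnion (nbhd E)))
    {f : ℕ → α} {t : ℕ} (hinj : Set.InjOn f (range t)) (htk : t ≤ k) :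
    ∑ u ∈ range t, (collisions E f u : ℝ) ≤ ε * d * t := by
  have hcard : #((range t).image f) = t := by rw [card_image_of_injOn hinj, card_range]
  have hcount := card_biUnion_add_sum_collisions hdeg f t
  have hexpand := hexp _ (hcard.trans_le htk)
  rw [hcard] at hexpand
  have hcount' : (#(((range t).image f).biUnion (nbhd E)) : ℝ) +
      ∑ u ∈ range t, (collisions E f u : ℝ) = d * t := by exact_mod_cast hcount
  linarith

theorem sub_two_mul_sum_collisions_le {d : ℕ} (hdeg : ∀ i, #(nbhd E i) = d)
    (f : ℕ → α) (y : ℕ → ℝ) (s : ℕ) :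
    d * ∑ t ∈ range s, |y t| - 2 * ∑ t ∈ range s, collisions E f t * |y t| ≤
      ∑ j, |∑ t ∈ range s with E (f t) j, y t| := by
  have hdeg_sum : ∑ j, ∑ t ∈ range s with E (f t) j, |y t| = d * ∑ t ∈ range s, |y t| :=
    sum_sum_filter_eq_mul_sum (fun t j => E (f t) j) (fun t => hdeg (f t)) _ _
  have hcoll_sum : ∑ j, ∑ t ∈ {t ∈ range s | E (f t) j} with
      ∃ u ∈ {u ∈ range s | E (f u) j}, u < t, |y t| =
      ∑ t ∈ range s, collisions E f t * |y t| := by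
    simp_rw [filter_filter, sum_filter]
    rw [sum_comm]
    refine sum_congr rfl fun t ht => ?_
    rw [← sum_filter, sum_const, nsmul_eq_mul, collisions]
    congr 3
    ext j
    have ht := mem_range.1 ht
    simp only [nbhd, mem_filter, mem_univ, true_and, mem_inter, mem_biUnion, mem_image,
      mem_range]
    constructor
    · rintro ⟨hj, u, ⟨-, hu⟩, hut⟩
      exact ⟨hj, f u, ⟨u, hut, rfl⟩, hu⟩
    · rintro ⟨hj, -, ⟨u, hut, rfl⟩, hu⟩
      exact ⟨hj, u, ⟨hut.trans ht, hu⟩, hut⟩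
  rw [← hdeg_sum, ← hcoll_sum, mul_sum, ← sum_sub_distrib]
  exact sum_le_sum fun j _ => sum_abs_sub_two_mul_sum_abs_nonmin_le_abs_sum _ _

theorem one_sub_two_mul_mul_sum_abs_le [Fintype α] {k d : ℕ} {ε : ℝ}
    (hdeg : ∀ i, #(nbhd E i) = d)
    (hexp : ∀ S : Finset α, #S ≤ k → (1 - ε) * d * #S ≤ #(S.biUnion (nbhd E)))
    (x : α → ℝ) (hx : #{i | x i ≠ 0} ≤ k) :
    (1 - 2 * ε) * d * ∑ i, |x i| ≤ ∑ j, |∑ i with E i j, x i| := by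
  set S : Finset α := {i | x i ≠ 0} with hS_def
  rcases S.eq_empty_or_nonempty with hS | hS
  · have hx0 : ∀ i, x i = 0 := fun i => by
      simpa [hS_def] using filter_eq_empty_iff.1 hS (mem_univ i)
    simp [hx0]
  obtain ⟨f, hinj, himage, hanti⟩ := S.exists_injOn_image_range_antitoneOn hS fun i => |x i|
  have hreindex : ∀ g : α → ℝ, (∀ i, x i = 0 → g i = 0) →
      ∑ t ∈ range #S, g (f t) = ∑ i, g i := by
    intro g hg
    rw [← sum_image hinj, himage]
    exact sum_subset (subset_univ S) fun i _ hi => hg i (by simpa [hS_def] using hi)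
  have hcols := sub_two_mul_sum_collisions_le hdeg f (x ∘ f) #S
  have habel := sum_mul_le_mul_sum_of_antitoneOn hanti (fun _ _ => abs_nonneg _)
    fun t ht => sum_collisions_le hdeg hexp
      (hinj.mono (coe_subset.2 (range_subset_range.2 ht))) (ht.trans hx)
  have hsum_abs : ∑ t ∈ range #S, |x (f t)| = ∑ i, |x i| :=
    hreindex (fun i => |x i|) fun i hi => by simp [hi]
  have hrows : ∀ j, ∑ t ∈ range #S with E (f t) j, x (f t) = ∑ i with E i j, x i := by
    intro j
    rw [sum_filter, sum_filter]
    exact hreindex (fun i => if E i j then x i else 0) fun i hi => by simp [hi]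
  simp only [Function.comp_apply, hsum_abs, hrows] at hcols habel
  linarith

end Expander

theorem expander_rip1_general
    {N m k d : ℕ} (ε : ℝ)
    (E : Fin N → Fin m → Prop) [∀ i j, Decidable (E i j)]
    (hdeg : ∀ i : Fin N, (Finset.univ.filter (fun j => E i j)).card = d)
    (hexpander : ∀ S : Finset (Fin N), S.card ≤ k →
      (1 - ε) * d * (S.card : ℝ) ≤
        ((S.biUnion (fun i => Finset.univ.filter (fun j => E i j))).card : ℝ))
    (x : Fin N → ℝ)
    (hx : (Finset.univ.filter (fun i => x i ≠ 0)).card ≤ k) :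
    (1 - 2 * ε) * d * (∑ i, |x i|) ≤
        ∑ j, |∑ i, (if E i j then (1 : ℝ) else 0) * x i| ∧
      ∑ j, |∑ i, (if E i j then (1 : ℝ) else 0) * x i| ≤ d * ∑ i, |x i| := by
  have hrow : ∀ j, ∑ i, (if E i j then (1 : ℝ) else 0) * x i = ∑ i with E i j, x i := by
    simp only [boole_mul, sum_filter, implies_true]
  simp only [hrow]
  exact ⟨Expander.one_sub_two_mul_mul_sum_abs_le hdeg hexpander x hx,
    Expander.sum_abs_sum_le_mul_sum_abs hdeg x⟩

/-- RIP-1 for adjacency matrices of `(k, d, ε)`-expander graphs: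
for every `k`-sparse `x`, `(1 − 2ε) d ‖x‖₁ ≤ ‖Ax‖₁ ≤ d ‖x‖₁`. -/
theorem expander_rip1
    {N m k d : ℕ} (ε : ℝ) (hε0 : 0 < ε) (hε : ε < 1 / 2)
    (E : Fin N → Fin m → Prop) [∀ i j, Decidable (E i j)]
    (hdeg : ∀ i : Fin N, (Finset.univ.filter (fun j => E i j)).card = d)
    (hexpander : ∀ S : Finset (Fin N), S.card ≤ k →
      (1 - ε) * d * (S.card : ℝ) ≤
        ((S.biUnion (fun i => Finset.univ.filter (fun j => E i j))).card : ℝ))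
    (x : Fin N → ℝ)
    (hx : (Finset.univ.filter (fun i => x i ≠ 0)).card ≤ k) :
    (1 - 2 * ε) * d * (∑ i, |x i|) ≤
        ∑ j, |∑ i, (if E i j then (1 : ℝ) else 0) * x i| ∧
      ∑ j, |∑ i, (if E i j then (1 : ℝ) else 0) * x i| ≤ d * ∑ i, |x i| :=
  expander_rip1_general ε E hdeg hexpander x hx
end

section
/- Greedy head approximation guarantee (Hochbaum–Pathria): For every ε > 0, the greedy algorithm that iteratively selects the group covering the largest total weight of uncovered elements, run for ⌈G·log₂(1/ε)⌉ iterations, covers a total weight of at least (1−ε) times the maximum total weight coverable by any G groups. That is, it is a ((1−ε), G, ⌈G log₂(1/ε)⌉, 1)-head approximation. -/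
open Finset

/-!
Coverage `f = coveredWeight Gr w` is monotone and has diminishing marginal gains. If `S` is the
current greedy selection and `I` is any choice of at most `G` groups, then
`f I ≤ f (S ∪ I) ≤ f S + G · (gain of the greedy step)`, so each greedy step shrinks the gap
`f I - f S` by a factor `1 - 1/G`. After `T ≥ G log₂(1/ε) ≥ G ln(1/ε)` steps the gap is at most
`(1 - 1/G)^T f I ≤ e^{-T/G} f I ≤ ε f I`.
-/

def coveredWeight {N M : ℕ} (Gr : Fin M → Finset (Fin N)) (w : Fin N → ℝ)
    (I : Finset (Fin M)) : ℝ :=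
  ∑ j ∈ I.biUnion Gr, w j

section DiminishingReturns

variable {α : Type*} [DecidableEq α] {f : Finset α → ℝ}

def HasDiminishingReturns (f : Finset α → ℝ) : Prop :=
  ∀ ⦃S S' : Finset α⦄, S ⊆ S' → ∀ i, f (insert i S') - f S' ≤ f (insert i S) - f S

theorem HasDiminishingReturns.le_add_sum_marginal (hdim : HasDiminishingReturns f)
    (S I : Finset α) :
    f (S ∪ I) ≤ f S + ∑ i ∈ I, (f (insert i S) - f S) := by
  induction I using Finset.induction with
  | empty => simp
  | @insert a I ha ih =>
    rw [union_insert, sum_insert ha]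
    linarith [hdim (subset_union_left : S ⊆ S ∪ I) a]

theorem sub_le_one_sub_inv_mul_sub_of_greedy_step (hmono : Monotone f)
    (hdim : HasDiminishingReturns f)
    {S S' I : Finset α} {G : ℝ} (hI : (#I : ℝ) ≤ G) (hSS' : S ⊆ S')
    (hgreedy : ∀ i, f (insert i S) ≤ f S') :
    f I - f S' ≤ (1 - G⁻¹) * (f I - f S) := by
  have hgain : 0 ≤ f S' - f S := sub_nonneg.2 (hmono hSS')
  have hcover : f I ≤ f S + G * (f S' - f S) := calc
    f I ≤ f (S ∪ I) := hmono subset_union_right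
    _ ≤ f S + ∑ i ∈ I, (f (insert i S) - f S) :=
      hdim.le_add_sum_marginal S I
    _ ≤ f S + #I * (f S' - f S) := by
      rw [← nsmul_eq_mul]
      gcongr
      exact sum_le_card_nsmul _ _ _ fun i _ => by linarith [hgreedy i]
    _ ≤ f S + G * (f S' - f S) := by gcongr
  rcases (Nat.cast_nonneg #I |>.trans hI).eq_or_lt with rfl | hG
  · simp only [inv_zero, sub_zero, one_mul]
    linarith
  · have : G⁻¹ * (f I - f S) ≤ f S' - f S := by
      rw [inv_mul_le_iff₀ hG]
      linarith
    linarith [mul_sub_right_distrib 1 G⁻¹ (f I - f S)]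

theorem sub_le_pow_mul_sub_of_greedy (hmono : Monotone f)
    (hdim : HasDiminishingReturns f)
    {A : ℕ → Finset α} (hA : Monotone A) {T : ℕ}
    (hgreedy : ∀ n < T, ∀ i, f (insert i (A n)) ≤ f (A (n + 1)))
    {I : Finset α} {G : ℕ} (hI : #I ≤ G) :
    f I - f (A T) ≤ (1 - (G : ℝ)⁻¹) ^ T * (f I - f (A 0)) := by
  have hr : 0 ≤ 1 - (G : ℝ)⁻¹ := sub_nonneg.2 (Nat.cast_inv_le_one G)
  exact le_geom (u := fun n => f I - f (A n)) hr T fun n hn =>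
    sub_le_one_sub_inv_mul_sub_of_greedy_step hmono hdim (by exact_mod_cast hI)
      (hA n.le_succ) (hgreedy n hn)

end DiminishingReturns

section Coverage

variable {N M : ℕ} (Gr : Fin M → Finset (Fin N)) {w : Fin N → ℝ}

theorem coveredWeight_empty : coveredWeight Gr w ∅ = 0 := by
  simp [coveredWeight]

theorem coveredWeight_nonneg (hw : ∀ j, 0 ≤ w j) (I : Finset (Fin M)) :
    0 ≤ coveredWeight Gr w I :=
  sum_nonneg fun j _ => hw j

theorem coveredWeight_mono (hw : ∀ j, 0 ≤ w j) : Monotone (coveredWeight Gr w) :=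
  fun _ _ h => sum_le_sum_of_subset_of_nonneg (biUnion_subset_biUnion_of_subset_left Gr h)
    fun j _ _ => hw j

theorem coveredWeight_insert_sub (i : Fin M) (S : Finset (Fin M)) :
    coveredWeight Gr w (insert i S) - coveredWeight Gr w S = ∑ j ∈ Gr i \ S.biUnion Gr, w j := by
  rw [sub_eq_iff_eq_add', coveredWeight, coveredWeight, biUnion_insert, union_comm,
    ← union_sdiff_self_eq_union, sum_union disjoint_sdiff]

theorem coveredWeight_hasDiminishingReturns (hw : ∀ j, 0 ≤ w j) :
    HasDiminishingReturns (coveredWeight Gr w) := by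
  intro S S' h i
  rw [coveredWeight_insert_sub, coveredWeight_insert_sub]
  exact sum_le_sum_of_subset_of_nonneg
    (sdiff_subset_sdiff subset_rfl (biUnion_subset_biUnion_of_subset_left Gr h)) fun j _ _ => hw j

end Coverage

section PrefixImage

variable {β : Type*} [DecidableEq β] {T : ℕ} (g : Fin T → β)

def prefixImage (n : ℕ) : Finset β :=
  (univ.filter fun s : Fin T => (s : ℕ) < n).image g

theorem prefixImage_zero : prefixImage g 0 = ∅ := by
  simp [prefixImage]

theorem prefixImage_succ {n : ℕ} (hn : n < T) :
    prefixImage g (n + 1) = insert (g ⟨n, hn⟩) (prefixImage g n) := by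
  rw [prefixImage, prefixImage, ← image_insert]
  congr 1
  ext s
  simp only [mem_filter, mem_univ, true_and, mem_insert, Fin.ext_iff]
  omega

theorem prefixImage_self : prefixImage g T = univ.image g := by
  rw [prefixImage, filter_true_of_mem fun s _ => s.isLt]

theorem prefixImage_mono : Monotone (prefixImage g) :=
  fun _ _ hmn => image_subset_image <| monotone_filter_right _ fun _ _ hs => lt_of_lt_of_le hs hmn

end PrefixImage

theorem one_sub_inv_pow_le_of_logb_le {G : ℝ} (hG : 1 ≤ G) {ε : ℝ} (hε : 0 < ε) {T : ℕ}
    (hT : G * Real.logb 2 (1 / ε) ≤ T) : (1 - G⁻¹) ^ T ≤ ε := by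
  have hr : 0 ≤ 1 - G⁻¹ := sub_nonneg.2 (inv_le_one_of_one_le₀ hG)
  rcases le_or_gt 1 ε with hε1 | hε1
  · exact (pow_le_one₀ hr (by linarith [inv_nonneg.2 (zero_le_one.trans hG)])).trans hε1
  have hlog_pos : 0 < Real.log (1 / ε) := Real.log_pos ((one_lt_div hε).2 hε1)
  have hlog : Real.log (1 / ε) ≤ T / G := calc
    Real.log (1 / ε) ≤ Real.logb 2 (1 / ε) := by
      rw [Real.logb, le_div_iff₀ (Real.log_pos one_lt_two)]
      nlinarith [Real.log_two_lt_d9]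
    _ ≤ T / G := by rw [le_div_iff₀ (by linarith)]; linarith
  calc (1 - G⁻¹) ^ T ≤ Real.exp (-G⁻¹) ^ T :=
        pow_le_pow_left₀ hr (by linarith [Real.add_one_le_exp (-G⁻¹)]) T
    _ = Real.exp (-(T / G)) := by rw [← Real.exp_nat_mul]; ring_nf
    _ ≤ Real.exp (-Real.log (1 / ε)) := Real.exp_le_exp.2 (neg_le_neg hlog)
    _ = ε := by rw [one_div, Real.log_inv, neg_neg, Real.exp_log hε]

/-- Hochbaum–Pathria: a greedy sequence of `⌈G log₂(1/ε)⌉` groups,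
each step picking a group covering the largest additional weight, covers at least
`(1−ε)` times the maximum weight coverable by any `G` groups: a
`((1−ε), G, ⌈G log₂(1/ε)⌉, 1)`-head approximation. -/
theorem greedy_head_approximation
    {N M G : ℕ} (Gr : Fin M → Finset (Fin N)) (w : Fin N → ℝ)
    (hw : ∀ j, 0 ≤ w j) (ε : ℝ) (hε : 0 < ε)
    (T : ℕ) (hT : T = ⌈(G : ℝ) * Real.logb 2 (1 / ε)⌉₊)
    (g : Fin T → Fin M)
    (hgreedy : ∀ t : Fin T, ∀ i : Fin M,
      coveredWeight Gr w
          (insert i ((Finset.univ.filter (fun s : Fin T => s < t)).image g)) ≤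
        coveredWeight Gr w
          (insert (g t) ((Finset.univ.filter (fun s : Fin T => s < t)).image g))) :
    ∀ I : Finset (Fin M), I.card ≤ G →
      (1 - ε) * coveredWeight Gr w I ≤ coveredWeight Gr w (Finset.univ.image g) := by
  intro I hI
  obtain rfl | hG := G.eq_zero_or_pos
  · rw [card_eq_zero.1 (Nat.le_zero.1 hI), coveredWeight_empty, mul_zero]
    exact coveredWeight_nonneg Gr hw _
  have hstep : ∀ n < T, ∀ i, coveredWeight Gr w (insert i (prefixImage g n)) ≤
      coveredWeight Gr w (prefixImage g (n + 1)) := fun n hn i => by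
    -- `prefixImage g n` is definitionally the set in `hgreedy`, `(univ.filter (· < ⟨n, hn⟩)).image g`.
    rw [prefixImage_succ g hn]
    exact hgreedy ⟨n, hn⟩ i
  have hgap := sub_le_pow_mul_sub_of_greedy (coveredWeight_mono Gr hw)
    (coveredWeight_hasDiminishingReturns Gr hw) (prefixImage_mono g) hstep hI
  rw [prefixImage_self, prefixImage_zero, coveredWeight_empty, sub_zero] at hgap
  have hdecay : (1 - (G : ℝ)⁻¹) ^ T ≤ ε :=
    one_sub_inv_pow_le_of_logb_le (Nat.one_le_cast.2 hG) hε (hT ▸ Nat.le_ceil _)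
  nlinarith [coveredWeight_nonneg Gr hw I]
end

section
/- Optimal dual solution of the Benders subproblem: Let v ∈ {0,1}^M, I_v = {i ∈ [N] : Σ_{j : i ∈ G_j} v_j > 0}, and let I_v^K ⊆ I_v be the indices of the K largest weights w_i (w ≥ 0) in I_v. Set α* = max_{i ∈ I_v \ I_v^K} w_i (or 0 if that set is empty), β*_i = w_i for i ∉ I_v and 0 otherwise, γ*_i = w_i − α* for i ∈ I_v^K and 0 otherwise. Then (α*, β*, γ*) is an optimal solution of: minimize αK + Σ_i β_i(Σ_{j : i∈G_j} v_j) + Σ_i γ_i subject to α + β_i + γ_i ≥ w_i for all i ∈ [N], α, β, γ ≥ 0. -/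
open Finset

/-- Number of selected groups covering element `i` (as a real). -/
def coverCount {N M : ℕ} (Gr : Fin M → Finset (Fin N)) (V : Finset (Fin M))
    (i : Fin N) : ℝ :=
  ((V.filter (fun j => i ∈ Gr j)).card : ℝ)

/-- Objective of the Benders subproblem (the LP dual). -/
def dualObj {N : ℕ} (K : ℕ) (cnt : Fin N → ℝ) (α : ℝ) (β γ : Fin N → ℝ) : ℝ :=
  α * K + ∑ i, β i * cnt i + ∑ i, γ i

/-!
Weak LP duality does all the work. The indicator vector of `I_v^K` is feasible for the primal
problem (at most `K` ones, each on a covered index) and has value `∑_{i ∈ I_v^K} w_i`, so this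
sum bounds the objective of every dual-feasible point from below. The proposed point attains
it: `β*` lives off `I_v`, where the cover counts vanish, and `α* K = |I_v^K| α*` because either
`|I_v^K| = K` or `I_v^K = I_v`, and in the latter case `α* = 0`.
-/

section CoverCount

variable {N M : ℕ} (Gr : Fin M → Finset (Fin N)) (V : Finset (Fin M)) (i : Fin N)

theorem coverCount_nonneg : 0 ≤ coverCount Gr V i := Nat.cast_nonneg _

theorem one_le_coverCount_iff : 1 ≤ coverCount Gr V i ↔ ∃ j ∈ V, i ∈ Gr j := by
  rw [coverCount, Nat.one_le_cast, Nat.one_le_iff_ne_zero, Ne, card_eq_zero,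
    ← ne_eq, ← nonempty_iff_ne_empty, filter_nonempty_iff]

theorem coverCount_eq_zero_iff : coverCount Gr V i = 0 ↔ ¬∃ j ∈ V, i ∈ Gr j := by
  rw [coverCount, Nat.cast_eq_zero, card_eq_zero, filter_eq_empty_iff]
  simp

end CoverCount

section WeakDuality

variable {N K : ℕ} {cnt w : Fin N → ℝ} {α : ℝ} {β γ : Fin N → ℝ}

theorem sum_mul_le_dualObj {u : Fin N → ℝ} (hu₀ : ∀ i, 0 ≤ u i) (hu₁ : ∀ i, u i ≤ 1)
    (hu_cnt : ∀ i, u i ≤ cnt i) (hu_sum : ∑ i, u i ≤ K)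
    (hα : 0 ≤ α) (hβ : ∀ i, 0 ≤ β i) (hγ : ∀ i, 0 ≤ γ i)
    (hfeas : ∀ i, w i ≤ α + β i + γ i) :
    ∑ i, w i * u i ≤ dualObj K cnt α β γ :=
  calc ∑ i, w i * u i
      ≤ ∑ i, (α + β i + γ i) * u i :=
        sum_le_sum fun i _ => mul_le_mul_of_nonneg_right (hfeas i) (hu₀ i)
    _ = α * ∑ i, u i + ∑ i, β i * u i + ∑ i, γ i * u i := by
        simp only [add_mul, sum_add_distrib, mul_sum]
    _ ≤ α * K + ∑ i, β i * cnt i + ∑ i, γ i := by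
        gcongr with i _ i _
        · exact hβ i
        · exact hu_cnt i
        · exact mul_le_of_le_one_right (hγ i) (hu₁ i)

theorem sum_le_dualObj {IK : Finset (Fin N)} (hK : #IK ≤ K)
    (hcnt₀ : ∀ i, 0 ≤ cnt i) (hcnt₁ : ∀ i ∈ IK, 1 ≤ cnt i)
    (hα : 0 ≤ α) (hβ : ∀ i, 0 ≤ β i) (hγ : ∀ i, 0 ≤ γ i)
    (hfeas : ∀ i, w i ≤ α + β i + γ i) :
    ∑ i ∈ IK, w i ≤ dualObj K cnt α β γ := by
  have key := sum_mul_le_dualObj (u := fun i => if i ∈ IK then 1 else 0)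
    (fun i => by split_ifs <;> norm_num) (fun i => by split_ifs <;> norm_num)
    (fun i => by split_ifs with h; exacts [hcnt₁ i h, hcnt₀ i])
    (by simpa using hK) hα hβ hγ hfeas
  simpa using key

theorem dualObj_eq_sum {IK : Finset (Fin N)} (hβ : ∀ i, β i * cnt i = 0)
    (hα : α * K = #IK * α) :
    dualObj K cnt α β (fun i => if i ∈ IK then w i - α else 0) = ∑ i ∈ IK, w i := by
  simp only [dualObj, hβ, sum_const_zero, sum_ite_mem, univ_inter, sum_sub_distrib, sum_const,
    nsmul_eq_mul, hα]
  ring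

end WeakDuality

theorem card_eq_of_sdiff_nonempty {ι : Type*} [DecidableEq ι] {s t : Finset ι} {K : ℕ}
    (hts : t ⊆ s) (hcard : #t = min K #s) (hne : (s \ t).Nonempty) : #t = K := by
  have := card_pos.2 hne
  rw [card_sdiff_of_subset hts] at this
  omega

theorem fold_max_sdiff_mul_eq_card_mul {ι : Type*} [DecidableEq ι] {s t : Finset ι} {K : ℕ} (f : ι → ℝ)
    (hts : t ⊆ s) (hcard : #t = min K #s) :
    fold max 0 f (s \ t) * K = #t * fold max 0 f (s \ t) := by
  rcases (s \ t).eq_empty_or_nonempty with h | h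
  · simp [h]
  · rw [card_eq_of_sdiff_nonempty hts hcard h, mul_comm]

/-- the explicit dual solution `(α*, β*, γ*)` built from the covered
index set `I_v` and its `K` heaviest indices `I_v^K` is feasible and optimal for the
Benders subproblem. -/
theorem benders_dual_optimal
    {N M K : ℕ} (Gr : Fin M → Finset (Fin N)) (w : Fin N → ℝ)
    (hw : ∀ i, 0 ≤ w i) (V : Finset (Fin M)) (Iv IK : Finset (Fin N))
    (hIv : Iv = Finset.univ.filter (fun i => ∃ j ∈ V, i ∈ Gr j))
    (hIK : IK ⊆ Iv) (hcard : IK.card = min K Iv.card)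
    (hlargest : ∀ i ∈ IK, ∀ i' ∈ Iv \ IK, w i' ≤ w i) :
    let αs : ℝ := Finset.fold max 0 w (Iv \ IK)
    let βs : Fin N → ℝ := fun i => if i ∈ Iv then 0 else w i
    let γs : Fin N → ℝ := fun i => if i ∈ IK then w i - αs else 0
    (0 ≤ αs ∧ (∀ i, 0 ≤ βs i) ∧ (∀ i, 0 ≤ γs i) ∧
      (∀ i, w i ≤ αs + βs i + γs i)) ∧
    (∀ (α : ℝ) (β γ : Fin N → ℝ), 0 ≤ α → (∀ i, 0 ≤ β i) → (∀ i, 0 ≤ γ i) →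
      (∀ i, w i ≤ α + β i + γ i) →
      dualObj K (coverCount Gr V) αs βs γs ≤ dualObj K (coverCount Gr V) α β γ) := by
  intro αs βs γs
  have hmem : ∀ i, i ∈ Iv ↔ ∃ j ∈ V, i ∈ Gr j := by simp [hIv]
  have hαs₀ : 0 ≤ αs := (le_fold_max _).2 (Or.inl le_rfl)
  have hαs_le : ∀ i ∈ IK, αs ≤ w i := fun i hi => (fold_max_le _).2 ⟨hw i, hlargest i hi⟩
  have hle_αs : ∀ i ∈ Iv \ IK, w i ≤ αs := fun i hi => (le_fold_max _).2 (Or.inr ⟨i, hi, le_rfl⟩)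
  refine ⟨⟨hαs₀, fun i => ?_, fun i => ?_, fun i => ?_⟩, fun α β γ hα hβ hγ hfeas => ?_⟩
  · dsimp only [βs]; split_ifs; exacts [le_rfl, hw i]
  · dsimp only [γs]; split_ifs with h; exacts [sub_nonneg.2 (hαs_le i h), le_rfl]
  · dsimp only [βs, γs]
    by_cases hK : i ∈ IK
    · simp [hK, hIK hK]
    by_cases hv : i ∈ Iv
    · simpa [hK, hv] using hle_αs i (mem_sdiff.2 ⟨hv, hK⟩)
    · simpa [hK, hv] using hαs₀
  have hβs : ∀ i, βs i * coverCount Gr V i = 0 := fun i => by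
    by_cases hv : i ∈ Iv
    · simp [βs, hv]
    · simp [(coverCount_eq_zero_iff Gr V i).2 ((hmem i).not.1 hv)]
  rw [dualObj_eq_sum hβs (fold_max_sdiff_mul_eq_card_mul w hIK hcard)]
  exact sum_le_dualObj (hcard ▸ min_le_left _ _) (coverCount_nonneg Gr V)
    (fun i hi => (one_le_coverCount_iff Gr V i).2 ((hmem i).1 (hIK hi))) hα hβ hγ hfeas
end
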